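/- Let Z_{0,z}(τ ≥ k) denote the polymer partition function restricted to up-right paths from 0 to z whose exit time τ is at least k, i.e., paths whose first k steps are all e_1 steps. For z ∈ ℤ²_{≥0} and integers 0 ≤ l ≤ k (with the relevant quantities positive), Z_{0,z}(τ ≥ l)/Z_{0,z-e_1}(τ ≥ l) ≤ Z_{0,z}(τ ≥ k)/Z_{0,z-e_1}(τ ≥ k) and Z_{0,z}(τ ≥ l)/Z_{0,z-e_2}(τ ≥ l) ≥ Z_{0,z}(τ ≥ k)/Z_{0,z-e_2}(τ ≥ k). -/

import Mathlib

/-- The `j`-th vertex of the up-right path started at `u` whose `i`-th step is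
`e₁` if `σ i = true` and `e₂` if `σ i = false`. -/
def pathVertex (u : ℤ × ℤ) (σ : ℕ → Bool) (j : ℕ) : ℤ × ℤ :=
  (u.1 + ((Finset.range j).filter fun i => σ i = true).card,
   u.2 + ((Finset.range j).filter fun i => σ i = false).card)

/-- The polymer partition function `Z_{u,v}` over up-right paths from `u` to `v`. -/
noncomputable def Zfun (Y : ℤ × ℤ → ℝ) (u v : ℤ × ℤ) : ℝ :=
  if u.1 ≤ v.1 ∧ u.2 ≤ v.2 then
    ∑ σ : Fin ((v.1 - u.1).toNat + (v.2 - u.2).toNat) → Bool,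
      (if (Finset.univ.filter fun i => σ i = true).card = (v.1 - u.1).toNat then
        ∏ j ∈ Finset.range ((v.1 - u.1).toNat + (v.2 - u.2).toNat + 1),
          Y (pathVertex u
              (fun i => if h : i < (v.1 - u.1).toNat + (v.2 - u.2).toNat then σ ⟨i, h⟩
                        else false) j)
      else 0)
  else 0

/-- The restricted partition function `Z_{0,z}(τ ≥ k)`: the sum over up-right paths
from `0` to `z` whose first `k` steps are all `e₁` steps. -/
noncomputable def ZExit (Y : ℤ × ℤ → ℝ) (z : ℤ × ℤ) (k : ℕ) : ℝ :=
  if 0 ≤ z.1 ∧ 0 ≤ z.2 then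
    ∑ σ : Fin (z.1.toNat + z.2.toNat) → Bool,
      (if (Finset.univ.filter fun i => σ i = true).card = z.1.toNat ∧
          (∀ i : Fin (z.1.toNat + z.2.toNat), (i : ℕ) < k → σ i = true) then
        ∏ j ∈ Finset.range (z.1.toNat + z.2.toNat + 1),
          Y (pathVertex 0
              (fun i => if h : i < z.1.toNat + z.2.toNat then σ ⟨i, h⟩ else false) j)
      else 0)
  else 0

/-!
Write `S_j(n, a) = Z_{0,(a, n - a)}(τ ≥ j)`. Splitting a path at its last step gives
`S_j(n + 1, a) = Y(a, n + 1 - a) (S_j(n, a - 1) + S_j(n, a))` off the axes, so both inequalities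
reduce to the cross inequality `S_l(n, a) S_k(n, a - 1) ≤ S_k(n, a) S_l(n, a - 1)` for `l ≤ k`,
i.e. `S_l / S_k` decreases along each antidiagonal. It is proved by induction on `n`: for `a ≤ k`
the left side vanishes, at `a = n` the two functions agree on the `x`-axis while `S_k ≤ S_l`, and
in between the recursion writes both sides through two instances on the previous antidiagonal,
which chain because `S_k(n - 1, a - 1) > 0`.
-/

open Finset

lemma add_mul_add_le_of_cross {α : Type*} [CommRing α] [LinearOrder α] [IsStrictOrderedRing α]
    {p₁ p₂ p₃ q₁ q₂ q₃ : α} (hq₁ : 0 ≤ q₁) (hq₂ : 0 < q₂) (hq₃ : 0 ≤ q₃)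
    (h₁₂ : p₁ * q₂ ≤ q₁ * p₂) (h₂₃ : p₂ * q₃ ≤ q₂ * p₃) :
    (p₂ + p₁) * (q₃ + q₂) ≤ (q₂ + q₁) * (p₃ + p₂) := by
  have h₁₃ : p₁ * q₃ ≤ q₁ * p₃ := by
    refine le_of_mul_le_mul_left ?_ hq₂
    calc q₂ * (p₁ * q₃) = p₁ * q₂ * q₃ := by ring
      _ ≤ q₁ * p₂ * q₃ := mul_le_mul_of_nonneg_right h₁₂ hq₃
      _ = q₁ * (p₂ * q₃) := by ring
      _ ≤ q₁ * (q₂ * p₃) := mul_le_mul_of_nonneg_left h₂₃ hq₁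
      _ = q₂ * (q₁ * p₃) := by ring
  linear_combination h₁₂ + h₂₃ + h₁₃

section Paths

def extendByFalse {n : ℕ} (σ : Fin n → Bool) (i : ℕ) : Bool :=
  if h : i < n then σ ⟨i, h⟩ else false

lemma extendByFalse_coe {n : ℕ} (σ : Fin n → Bool) (i : Fin n) :
    extendByFalse σ i = σ i := by
  simp [extendByFalse]

lemma extendByFalse_snoc_of_lt {m : ℕ} (σ : Fin m → Bool) (s : Bool) {i : ℕ} (hi : i < m) :
    extendByFalse (Fin.snoc (α := fun _ => Bool) σ s) i = extendByFalse σ i := by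
  have hcast : (⟨i, by omega⟩ : Fin (m + 1)) = Fin.castSucc ⟨i, hi⟩ := rfl
  simp only [extendByFalse, dif_pos hi, dif_pos (Nat.lt_succ_of_lt hi), hcast, Fin.snoc_castSucc]

lemma pathVertex_congr (u : ℤ × ℤ) {f g : ℕ → Bool} {j : ℕ} (h : ∀ i < j, f i = g i) :
    pathVertex u f j = pathVertex u g j := by
  have hfilter (c : Bool) : {i ∈ range j | f i = c} = {i ∈ range j | g i = c} :=
    filter_congr fun i hi => by rw [h i (mem_range.mp hi)]
  simp only [pathVertex, hfilter]

lemma card_filter_range_extendByFalse {n : ℕ} (σ : Fin n → Bool) (c : Bool) :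
    #{i ∈ range n | extendByFalse σ i = c} = #{i | σ i = c} := by
  rw [card_filter, card_filter,
    ← Fin.sum_univ_eq_sum_range (fun i => if extendByFalse σ i = c then 1 else 0)]
  simp only [extendByFalse_coe]

lemma card_filter_eq_false {n : ℕ} (σ : Fin n → Bool) :
    #{i | σ i = false} = n - #{i | σ i = true} := by
  have h := card_filter_add_card_filter_not (s := (univ : Finset (Fin n))) (fun i => σ i = true)
  simp only [Bool.not_eq_true, card_univ, Fintype.card_fin] at h
  omega

lemma pathVertex_extendByFalse_self {n : ℕ} (σ : Fin n → Bool) :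
    pathVertex 0 (extendByFalse σ) n =
      (((#{i | σ i = true} : ℕ) : ℤ), ((n - #{i | σ i = true} : ℕ) : ℤ)) := by
  simp [pathVertex, card_filter_range_extendByFalse, card_filter_eq_false]

lemma card_filter_snoc_eq_true {m : ℕ} (σ : Fin m → Bool) (s : Bool) :
    #{i | Fin.snoc (α := fun _ => Bool) σ s i = true} =
      #{i | σ i = true} + if s then 1 else 0 := by
  rw [card_filter, Fin.sum_univ_castSucc]
  simp only [Fin.snoc_castSucc, Fin.snoc_last, ← card_filter]

lemma forall_lt_snoc_iff {m k : ℕ} (σ : Fin m → Bool) (s : Bool) (hk : k ≤ m) :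
    (∀ i : Fin (m + 1), (i : ℕ) < k → Fin.snoc (α := fun _ => Bool) σ s i = true) ↔
      ∀ i : Fin m, (i : ℕ) < k → σ i = true := by
  refine ⟨fun h i hi => by simpa using h i.castSucc hi, fun h i hi => ?_⟩
  have hcast : i = Fin.castSucc ⟨i, by omega⟩ := rfl
  rw [hcast, Fin.snoc_castSucc]
  exact h _ hi

lemma card_filter_lt (n a : ℕ) (h : a ≤ n) : #{i : Fin n | (i : ℕ) < a} = a := by
  have hrange : {i ∈ range n | i < a} = range a := by
    ext i
    simp only [mem_filter, mem_range]
    omega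
  rw [card_filter, Fin.sum_univ_eq_sum_range (fun i => if i < a then 1 else 0), ← card_filter,
    hrange, card_range]

end Paths

section ExitSum

variable (Y : ℤ × ℤ → ℝ)

noncomputable def pathWeight {n : ℕ} (σ : Fin n → Bool) : ℝ :=
  ∏ j ∈ range (n + 1), Y (pathVertex 0 (extendByFalse σ) j)

noncomputable def exitWeight {n : ℕ} (a k : ℕ) (σ : Fin n → Bool) : ℝ :=
  if #{i | σ i = true} = a ∧ ∀ i : Fin n, (i : ℕ) < k → σ i = true then pathWeight Y σ
  else 0

/-- `Z_{0,(a, n - a)}(τ ≥ k)`, indexed by the antidiagonal `n` and the abscissa `a`. -/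
noncomputable def exitSum (n a k : ℕ) : ℝ :=
  ∑ σ : Fin n → Bool, exitWeight Y a k σ

lemma ZExit_eq_exitSum {x y : ℤ} {n a : ℕ} (hx : 0 ≤ x) (hy : 0 ≤ y) (ha : x.toNat = a)
    (hn : x.toNat + y.toNat = n) (k : ℕ) : ZExit Y (x, y) k = exitSum Y n a k := by
  subst ha hn
  exact if_pos ⟨hx, hy⟩

lemma pathWeight_snoc {m : ℕ} (σ : Fin m → Bool) (s : Bool) :
    pathWeight Y (Fin.snoc (α := fun _ => Bool) σ s) =
      pathWeight Y σ *
        Y (pathVertex 0 (extendByFalse (Fin.snoc (α := fun _ => Bool) σ s)) (m + 1)) := by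
  rw [pathWeight, prod_range_succ, pathWeight]
  congr 1
  refine prod_congr rfl fun j hj => congrArg Y (pathVertex_congr 0 fun i hi => ?_)
  exact extendByFalse_snoc_of_lt σ s (by rw [mem_range] at hj; omega)

lemma exitWeight_snoc {m a a' k : ℕ} (σ : Fin m → Bool) (s : Bool) (hk : k ≤ m)
    (ha : a' + (if s then 1 else 0) = a) :
    exitWeight Y a k (Fin.snoc (α := fun _ => Bool) σ s) =
      Y (a, ((m + 1 - a : ℕ) : ℤ)) * exitWeight Y a' k σ := by
  have hcard :
      #{i | Fin.snoc (α := fun _ => Bool) σ s i = true} = a ↔ #{i | σ i = true} = a' := by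
    rw [card_filter_snoc_eq_true]; omega
  simp only [exitWeight, hcard, forall_lt_snoc_iff σ s hk]
  split_ifs with h
  · rw [pathWeight_snoc, pathVertex_extendByFalse_self, card_filter_snoc_eq_true, h.1, ha,
      mul_comm]
  · rw [mul_zero]

lemma exitSum_succ {m a k : ℕ} (ha : 1 ≤ a) (hk : k ≤ m) :
    exitSum Y (m + 1) a k =
      Y (a, ((m + 1 - a : ℕ) : ℤ)) * (exitSum Y m (a - 1) k + exitSum Y m a k) := by
  rw [exitSum, ← (Fin.snocEquiv fun _ => Bool).sum_comp, Fintype.sum_prod_type, Fintype.sum_bool,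
    mul_add, exitSum, exitSum, mul_sum, mul_sum]
  congr 1 <;> refine sum_congr rfl fun σ _ => exitWeight_snoc Y σ _ hk ?_
  · simp only [if_true]; omega
  · simp

lemma exitWeight_nonneg (hY : ∀ x, 0 ≤ Y x) {n : ℕ} (a k : ℕ) (σ : Fin n → Bool) :
    0 ≤ exitWeight Y a k σ := by
  unfold exitWeight pathWeight
  split_ifs
  exacts [prod_nonneg fun j _ => hY _, le_rfl]

lemma exitSum_nonneg (hY : ∀ x, 0 ≤ Y x) (n a k : ℕ) : 0 ≤ exitSum Y n a k :=
  sum_nonneg fun σ _ => exitWeight_nonneg Y hY a k σ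

lemma exitSum_antitone (hY : ∀ x, 0 ≤ Y x) (n a : ℕ) {k l : ℕ} (hlk : l ≤ k) :
    exitSum Y n a k ≤ exitSum Y n a l := by
  refine sum_le_sum fun σ _ => ?_
  by_cases h : #{i | σ i = true} = a ∧ ∀ i : Fin n, (i : ℕ) < k → σ i = true
  · rw [exitWeight, exitWeight, if_pos h, if_pos ⟨h.1, fun i hi => h.2 i (hi.trans_le hlk)⟩]
  · rw [exitWeight, if_neg h]
    exact exitWeight_nonneg Y hY a l σ

/-- The path that goes right first and then up. -/
lemma exitSum_pos (hY : ∀ x, 0 < Y x) {n a k : ℕ} (hka : k ≤ a) (han : a ≤ n) :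
    0 < exitSum Y n a k := by
  refine sum_pos' (fun σ _ => exitWeight_nonneg Y (fun x => (hY x).le) a k σ)
    ⟨fun i => decide ((i : ℕ) < a), mem_univ _, ?_⟩
  rw [exitWeight, if_pos]
  · exact prod_pos fun j _ => hY _
  simp only [decide_eq_true_eq, card_filter_lt n a han]
  exact ⟨trivial, fun i hi => hi.trans_le hka⟩

lemma exitSum_eq_zero {n a k : ℕ} (hak : a < k) (han : a < n) : exitSum Y n a k = 0 := by
  refine sum_eq_zero fun σ _ => if_neg ?_
  rintro ⟨hcard, hprefix⟩
  have hsub : univ.filter (fun i : Fin n => (i : ℕ) < a + 1) ⊆ univ.filter (σ · = true) :=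
    fun i hi => by
      simp only [mem_filter, mem_univ, true_and] at hi ⊢
      exact hprefix i (by omega)
  have := card_le_card hsub
  rw [card_filter_lt n (a + 1) han, hcard] at this
  omega

/-- The only path to `(n, 0)` goes right all the time. -/
lemma exitSum_self (n k : ℕ) : exitSum Y n n k = exitSum Y n n 0 := by
  refine sum_congr rfl fun σ _ => ?_
  by_cases hcard : #{i | σ i = true} = n
  · have hall : ∀ i, σ i = true := by
      simpa using eq_univ_of_card _ (hcard.trans (Fintype.card_fin n).symm)
    simp [exitWeight, hall]
  · simp [exitWeight, hcard]

theorem exitSum_cross (hY : ∀ x, 0 < Y x) {k l : ℕ} (hlk : l ≤ k) {n a : ℕ}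
    (ha : 1 ≤ a) (han : a ≤ n) :
    exitSum Y n a l * exitSum Y n (a - 1) k ≤ exitSum Y n a k * exitSum Y n (a - 1) l := by
  have hY₀ x : 0 ≤ Y x := (hY x).le
  induction n generalizing a with
  | zero => omega
  | succ m ih =>
    obtain rfl | hlk := eq_or_lt_of_le hlk
    · exact le_rfl
    by_cases hak : a ≤ k
    · rw [exitSum_eq_zero Y (by omega : a - 1 < k) (by omega), mul_zero]
      exact mul_nonneg (exitSum_nonneg Y hY₀ _ _ _) (exitSum_nonneg Y hY₀ _ _ _)
    obtain rfl | han := eq_or_lt_of_le han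
    · rw [exitSum_self Y _ l, exitSum_self Y _ k]
      exact mul_le_mul_of_nonneg_left (exitSum_antitone Y hY₀ _ _ hlk.le)
        (exitSum_nonneg Y hY₀ _ _ _)
    have key := add_mul_add_le_of_cross (exitSum_nonneg Y hY₀ m a k)
      (exitSum_pos Y hY (n := m) (a := a - 1) (by omega) (by omega)) (exitSum_nonneg Y hY₀ m _ k)
      (ih ha (by omega)) (ih (a := a - 1) (by omega) (by omega))
    rw [exitSum_succ Y ha (by omega), exitSum_succ Y ha (by omega),
      exitSum_succ Y (a := a - 1) (by omega) (by omega),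
      exitSum_succ Y (a := a - 1) (by omega) (by omega)]
    calc _ = Y (a, ((m + 1 - a : ℕ) : ℤ)) * Y ((a - 1 : ℕ), ((m + 1 - (a - 1) : ℕ) : ℤ)) *
          ((exitSum Y m (a - 1) l + exitSum Y m a l) *
            (exitSum Y m (a - 1 - 1) k + exitSum Y m (a - 1) k)) := by ring
      _ ≤ Y (a, ((m + 1 - a : ℕ) : ℤ)) * Y ((a - 1 : ℕ), ((m + 1 - (a - 1) : ℕ) : ℤ)) *
          ((exitSum Y m (a - 1) k + exitSum Y m a k) *
            (exitSum Y m (a - 1 - 1) l + exitSum Y m (a - 1) l)) :=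
        mul_le_mul_of_nonneg_left key (mul_nonneg (hY₀ _) (hY₀ _))
      _ = _ := by ring

end ExitSum

/-- Monotonicity of ratios of restricted partition functions in the exit-time cutoff. -/
theorem stmt5 (Y : ℤ × ℤ → ℝ) (hY : ∀ z, 0 < Y z) (z : ℤ × ℤ) (k l : ℕ)
    (hlk : l ≤ k) (hk : (k : ℤ) ≤ z.1 - 1) (hz : 1 ≤ z.2) :
    ZExit Y z l / ZExit Y (z - (1, 0)) l ≤ ZExit Y z k / ZExit Y (z - (1, 0)) k ∧
    ZExit Y z k / ZExit Y (z - (0, 1)) k ≤ ZExit Y z l / ZExit Y (z - (0, 1)) l := by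
  obtain ⟨x, y⟩ := z
  dsimp only at hk hz
  obtain ⟨m, hm⟩ : ∃ m, x.toNat + y.toNat = m + 1 := ⟨x.toNat + y.toNat - 1, by omega⟩
  obtain ⟨a, ha⟩ : ∃ a, x.toNat = a := ⟨_, rfl⟩
  have hz₀ := ZExit_eq_exitSum Y (by omega) (by omega) ha hm
  have hz₁ := ZExit_eq_exitSum Y (x := x - 1) (y := y) (a := a - 1) (n := m)
    (by omega) (by omega) (by omega) (by omega)
  have hz₂ := ZExit_eq_exitSum Y (x := x) (y := y - 1) (a := a) (n := m)
    (by omega) (by omega) ha (by omega)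
  have hrec j (hj : j ≤ k) := exitSum_succ Y (m := m) (a := a) (k := j) (by omega) (by omega)
  have hpos j (hj : j ≤ k) : 0 < exitSum Y m (a - 1) j ∧ 0 < exitSum Y m a j :=
    ⟨exitSum_pos Y hY (by omega) (by omega), exitSum_pos Y hY (by omega) (by omega)⟩
  have hcross := exitSum_cross Y hY hlk (n := m) (a := a) (by omega) (by omega)
  have hYz := hY (a, ((m + 1 - a : ℕ) : ℤ))
  simp only [Prod.mk_sub_mk, sub_zero, hz₀, hz₁, hz₂, hrec l hlk, hrec k le_rfl]
  constructor
  · rw [div_le_div_iff₀ (hpos l hlk).1 (hpos k le_rfl).1]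
    nlinarith [mul_le_mul_of_nonneg_left hcross hYz.le]
  · rw [div_le_div_iff₀ (hpos k le_rfl).2 (hpos l hlk).2]
    nlinarith [mul_le_mul_of_nonneg_left hcross hYz.le]
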